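/- arXiv:2010.04414 — 3 statements merged into one kernel-verified Lean document; each statement's English description precedes it below -/
import Mathlib

section
/- With random edge placement to p clusters, the expected replication factor (1/|V|)·Σ_{v∈V} E[|A(v)|] equals p - (p/|V|)·Σ_{v∈V} E[((p-1)/p)^{D[v]}], where D[v] is the degree of v. -/
/-!
A cluster `c` misses a vertex `v` exactly when all `D[v]` edges at `v` avoid `c`, which happens
for `(p - 1) ^ D[v] * p ^ (|E| - D[v])` of the `p ^ |E|` assignments. Counting the pairs
(assignment, cluster) with the cluster hit at `v` therefore gives `E[|A(v)|] = p - p ((p-1)/p)^D[v]`,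
and the theorem follows by averaging over `v`.
-/

open Finset

section

variable {E α : Type*} [Fintype E] [DecidableEq E] [Fintype α] [DecidableEq α]

theorem card_filter_forall_mem_ne (S : Finset E) (c : α) :
    #{f : E → α | ∀ e ∈ S, f e ≠ c} =
      (Fintype.card α - 1) ^ #S * Fintype.card α ^ (Fintype.card E - #S) := by
  have hpi : ({f : E → α | ∀ e ∈ S, f e ≠ c} : Finset _) =
      Fintype.piFinset fun e => if e ∈ S then univ.erase c else univ := by
    ext f
    simp only [mem_filter, mem_univ, true_and, Fintype.mem_piFinset]
    refine forall_congr' fun e => ?_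
    split_ifs <;> simp [*]
  rw [hpi, Fintype.card_piFinset]
  simp only [apply_ite card]
  rw [prod_ite, prod_const, prod_const, card_erase_of_mem (mem_univ c),
    card_univ, filter_mem_eq_inter, univ_inter, filter_not, filter_mem_eq_inter, univ_inter,
    card_univ_sdiff]

theorem sum_card_image_add_card_mul_card_avoiding (S : Finset E) :
    ∑ f : E → α, #(S.image f) +
        Fintype.card α * ((Fintype.card α - 1) ^ #S * Fintype.card α ^ (Fintype.card E - #S)) =
      Fintype.card α * Fintype.card α ^ Fintype.card E := by
  have hswap : ∑ f : E → α, #(S.image f) = ∑ c : α, #{f : E → α | c ∈ S.image f} := by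
    have hcount (f : E → α) : #(S.image f) = ∑ c : α, if c ∈ S.image f then 1 else 0 := by
      rw [sum_boole, filter_univ_mem, Nat.cast_id]
    simp_rw [hcount]
    rw [sum_comm]
    simp_rw [sum_boole, Nat.cast_id]
  have havoid (c : α) :
      #{f : E → α | c ∉ S.image f} = #{f : E → α | ∀ e ∈ S, f e ≠ c} := by
    congr 1
    ext f
    simp
  calc ∑ f : E → α, #(S.image f) +
        Fintype.card α * ((Fintype.card α - 1) ^ #S * Fintype.card α ^ (Fintype.card E - #S))
      = ∑ c : α, (#{f : E → α | c ∈ S.image f} + #{f : E → α | c ∉ S.image f}) := by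
        rw [hswap, sum_add_distrib]
        simp only [havoid, card_filter_forall_mem_ne, sum_const, card_univ, smul_eq_mul]
    _ = Fintype.card α * Fintype.card α ^ Fintype.card E := by
        simp only [card_filter_add_card_filter_not, sum_const, card_univ, Fintype.card_fun,
          smul_eq_mul]

theorem sum_card_image_div_card_pow (hα : 0 < Fintype.card α) (S : Finset E) :
    (∑ f : E → α, (#(S.image f) : ℝ)) / (Fintype.card α : ℝ) ^ Fintype.card E =
      Fintype.card α - Fintype.card α * ((Fintype.card α - 1) / Fintype.card α : ℝ) ^ #S := by
  have hsplit : Fintype.card α ^ Fintype.card E =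
      Fintype.card α ^ (Fintype.card E - #S) * Fintype.card α ^ #S := by
    rw [← pow_add, Nat.sub_add_cancel S.card_le_univ]
  have hsum := sum_card_image_add_card_mul_card_avoiding (α := α) S
  rw [hsplit] at hsum
  rw [← Nat.cast_pow, hsplit]
  replace hsum := congrArg (Nat.cast : ℕ → ℝ) hsum
  push_cast [Nat.cast_pred hα] at hsum ⊢
  have hq : (Fintype.card α : ℝ) ≠ 0 := by positivity
  rw [div_pow]
  field_simp
  linear_combination hsum

end

/-- With random edge placement into `p` clusters, the expected replication factor
`(1/|V|) Σ_v E[|A(v)|]` equals `p - (p/|V|) Σ_v E[((p-1)/p)^{D[v]}]`, where `A(v)` is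
the set of clusters containing an edge incident to `v` and `D[v]` is the degree of `v`.
Edges are modeled by a finite type `E` with an incidence relation `inc`, and the random
assignment by averaging over all functions `E → Fin p`. -/
theorem random_cut_expected_replication_factor
    (V E : Type) [Fintype V] [Fintype E] [DecidableEq E] [Nonempty V]
    (inc : E → V → Prop) [∀ e v, Decidable (inc e v)]
    (p : ℕ) (hp : 1 ≤ p) :
    (∑ f : E → Fin p, (1 / (Fintype.card V : ℝ)) *
        ∑ v : V, (((Finset.univ.filter (fun e => inc e v)).image f).card : ℝ)) /
      (p : ℝ) ^ (Fintype.card E) =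
    (p : ℝ) - ((p : ℝ) / (Fintype.card V : ℝ)) *
        ∑ v : V, (((p : ℝ) - 1) / (p : ℝ)) ^ ((Finset.univ.filter (fun e => inc e v)).card) := by
  have hV : (Fintype.card V : ℝ) ≠ 0 := by positivity
  have hexp (v : V) := sum_card_image_div_card_pow (α := Fin p) (by rw [Fintype.card_fin]; exact hp)
    (univ.filter (fun e => inc e v))
  simp only [Fintype.card_fin] at hexp
  rw [← mul_sum, sum_comm, mul_div_assoc, sum_div]
  simp only [hexp, sum_sub_distrib, ← mul_sum, sum_const, card_univ, nsmul_eq_mul]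
  field_simp
end

section
/- For a monotone submodular set function f on a finite ground set with f(∅) = 0, the greedy algorithm that iteratively adds the element with maximum marginal gain, run for K steps, returns a set A_greedy with f(A_greedy) ≥ (1 - 1/e)·max_{|A| ≤ K} f(A). -/
/-!
Submodularity bounds `f B` by `f (A i)` plus the sum over `x ∈ B` of the marginal gains at `A i`,
each of which is at most the greedy gain; as `|B| ≤ K`, the gap `f B - f (A i)` shrinks by the
factor `1 - 1/K` at every step. After `K` steps it is at most `(1 - 1/K)^K f B ≤ f B / e`.
-/

section Submodular

variable {Ω : Type} [DecidableEq Ω] {f : Finset Ω → ℝ}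

theorem le_add_sum_marginal_gain (hmono : Monotone f)
    (hsub : ∀ S T : Finset Ω, S ⊆ T → ∀ x : Ω, x ∉ T →
      f (insert x T) - f T ≤ f (insert x S) - f S)
    (S B : Finset Ω) :
    f (S ∪ B) ≤ f S + ∑ x ∈ B, (f (insert x S) - f S) := by
  induction B using Finset.induction_on with
  | empty => simp
  | @insert a B ha ih =>
    rw [Finset.sum_insert ha, Finset.union_insert]
    by_cases haSB : a ∈ S ∪ B
    · have hgain : f S ≤ f (insert a S) := hmono (Finset.subset_insert a S)
      rw [Finset.insert_eq_of_mem haSB]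
      linarith
    · have := hsub S (S ∪ B) Finset.subset_union_left a haSB
      linarith

theorem le_add_card_mul_greedy_gain (hmono : Monotone f)
    (hsub : ∀ S T : Finset Ω, S ⊆ T → ∀ x : Ω, x ∉ T →
      f (insert x T) - f T ≤ f (insert x S) - f S)
    {S : Finset Ω} {x : Ω} (hx : ∀ y : Ω, f (insert y S) ≤ f (insert x S)) (B : Finset Ω) :
    f B ≤ f S + B.card * (f (insert x S) - f S) := by
  calc f B ≤ f (S ∪ B) := hmono Finset.subset_union_right
    _ ≤ f S + ∑ y ∈ B, (f (insert y S) - f S) := le_add_sum_marginal_gain hmono hsub S B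
    _ ≤ f S + ∑ _y ∈ B, (f (insert x S) - f S) := by
        gcongr with y
        exact hx y
    _ = f S + B.card * (f (insert x S) - f S) := by rw [Finset.sum_const, nsmul_eq_mul]

theorem greedy_gap_le (hmono : Monotone f)
    (hsub : ∀ S T : Finset Ω, S ⊆ T → ∀ x : Ω, x ∉ T →
      f (insert x T) - f T ≤ f (insert x S) - f S)
    {S : Finset Ω} {x : Ω} (hx : ∀ y : Ω, f (insert y S) ≤ f (insert x S))
    {K : ℕ} (hK : 0 < K) {B : Finset Ω} (hB : B.card ≤ K) :
    f B - f (insert x S) ≤ (1 - 1 / (K : ℝ)) * (f B - f S) := by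
  have hgain : 0 ≤ f (insert x S) - f S := sub_nonneg.mpr (hmono (Finset.subset_insert x S))
  have hKpos : (0 : ℝ) < K := by exact_mod_cast hK
  have hbound : f B - f S ≤ K * (f (insert x S) - f S) := by
    have hcard : (B.card : ℝ) ≤ K := by exact_mod_cast hB
    linarith [le_add_card_mul_greedy_gain hmono hsub hx B, mul_le_mul_of_nonneg_right hcard hgain]
  have hdiv : (f B - f S) / K ≤ f (insert x S) - f S := by
    rwa [div_le_iff₀' hKpos]
  calc f B - f (insert x S) ≤ (f B - f S) - (f B - f S) / K := by linarith
    _ = (1 - 1 / (K : ℝ)) * (f B - f S) := by ring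

end Submodular

theorem greedy_submodular_approximation_general (Ω : Type) [DecidableEq Ω]
    (f : Finset Ω → ℝ)
    (hmono : ∀ S T : Finset Ω, S ⊆ T → f S ≤ f T)
    (hsub : ∀ S T : Finset Ω, S ⊆ T → ∀ x : Ω, x ∉ T →
      f (insert x T) - f T ≤ f (insert x S) - f S)
    (hempty : f ∅ = 0)
    (K : ℕ) (A : ℕ → Finset Ω) (hA0 : A 0 = ∅)
    (hgreedy : ∀ i < K, ∃ x : Ω, A (i + 1) = insert x (A i) ∧
      ∀ y : Ω, f (insert y (A i)) ≤ f (insert x (A i))) :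
    ∀ B : Finset Ω, B.card ≤ K → (1 - 1 / Real.exp 1) * f B ≤ f (A K) := by
  intro B hB
  have hmono' : Monotone f := fun S T hST => hmono S T hST
  rcases Nat.eq_zero_or_pos K with rfl | hK
  · simp [Finset.card_eq_zero.mp (Nat.le_zero.mp hB), hA0, hempty]
  have hfB : 0 ≤ f B := hempty ▸ hmono' (Finset.empty_subset B)
  have hK1 : (1 : ℝ) ≤ K := by exact_mod_cast hK
  have hgap : f B - f (A K) ≤ (1 - 1 / (K : ℝ)) ^ K * (f B - f (A 0)) := by
    refine le_geom (u := fun i => f B - f (A i)) ?_ K fun i hi => ?_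
    · linarith [div_le_one_of_le₀ hK1 (by positivity : (0:ℝ) ≤ K)]
    · obtain ⟨x, hAx, hx⟩ := hgreedy i hi
      simpa only [hAx] using greedy_gap_le hmono' hsub hx hK hB
  have hexp : (1 - 1 / (K : ℝ)) ^ K ≤ 1 / Real.exp 1 := by
    simpa [Real.exp_neg] using Real.one_sub_div_pow_le_exp_neg (n := K) (t := 1) hK1
  rw [hA0, hempty, sub_zero] at hgap
  linarith [mul_le_mul_of_nonneg_right hexp hfB]

/-- Greedy maximization of a monotone submodular function `f` with `f ∅ = 0`:
if `A 0 = ∅` and at each step `A (i+1)` is obtained from `A i` by inserting an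
element of maximum marginal gain, then after `K` steps
`f (A K) ≥ (1 - 1/e) * f B` for every set `B` with `|B| ≤ K`. -/
theorem greedy_submodular_approximation (Ω : Type) [Fintype Ω] [DecidableEq Ω]
    (f : Finset Ω → ℝ)
    (hmono : ∀ S T : Finset Ω, S ⊆ T → f S ≤ f T)
    (hsub : ∀ S T : Finset Ω, S ⊆ T → ∀ x : Ω, x ∉ T →
      f (insert x T) - f T ≤ f (insert x S) - f S)
    (hempty : f ∅ = 0)
    (K : ℕ) (A : ℕ → Finset Ω) (hA0 : A 0 = ∅)
    (hgreedy : ∀ i < K, ∃ x : Ω, A (i + 1) = insert x (A i) ∧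
      ∀ y : Ω, f (insert y (A i)) ≤ f (insert x (A i))) :
    ∀ B : Finset Ω, B.card ≤ K → (1 - 1 / Real.exp 1) * f B ≤ f (A K) :=
  greedy_submodular_approximation_general Ω f hmono hsub hempty K A hA0 hgreedy
end

section
/- For fixed p ≥ 2 and n ≥ 3, the expected replication factor p - (p/h_n(α))·Σ_{d=1}^{n-1}((p-1)/p)^d·d^{-α} is strictly decreasing in α, i.e., graphs with more skewed (higher α) degree distributions have lower expected replication under random vertex cuts. -/
/-!
Write `a d = ((p - 1) / p) ^ d`, `u d = d ^ (-α)` and `v d = d ^ (-β)`. The claim is that the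
`v`-weighted mean of `a` is smaller than its `u`-weighted mean. Both `a` and the weight ratio
`v / u = d ^ (α - β)` are strictly decreasing in `d`, so every term of the symmetrized double sum
`∑_{d,e} (a d - a e) (v d u e - u d v e)` is nonnegative, and the terms with `d ≠ e` are positive.
That double sum is twice the difference of the cross-multiplied weighted means, a strict weighted
Chebyshev inequality.
-/

open Finset

theorem sum_sum_mul_sub_mul_sub_eq {ι R : Type*} [CommRing R] (s : Finset ι) (a u v : ι → R) :
    ∑ i ∈ s, ∑ j ∈ s, (a i - a j) * (v i * u j - u i * v j) =
      2 * ((∑ i ∈ s, a i * v i) * ∑ i ∈ s, u i - (∑ i ∈ s, a i * u i) * ∑ i ∈ s, v i) := by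
  have hinner : ∀ i, ∑ j ∈ s, (a i - a j) * (v i * u j - u i * v j) =
      a i * v i * ∑ j ∈ s, u j - a i * u i * ∑ j ∈ s, v j
        - v i * ∑ j ∈ s, a j * u j + u i * ∑ j ∈ s, a j * v j := fun i => by
    simp only [mul_sum, ← sum_sub_distrib, ← sum_add_distrib]
    exact sum_congr rfl fun j _ => by ring
  simp only [hinner, sum_add_distrib, sum_sub_distrib, ← sum_mul]
  ring

section WeightedChebyshev

variable {ι R : Type*} [LinearOrder ι] [CommRing R] [LinearOrder R] [IsStrictOrderedRing R]
  {s : Finset ι} {a u v : ι → R}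

theorem mul_sub_mul_sub_pos_of_strictAntiOn (ha : StrictAntiOn a s)
    (huv : ∀ i ∈ s, ∀ j ∈ s, i < j → u i * v j < v i * u j) {i j : ι} (hi : i ∈ s) (hj : j ∈ s)
    (hij : i ≠ j) : 0 < (a i - a j) * (v i * u j - u i * v j) := by
  rcases hij.lt_or_gt with hij | hji
  · exact mul_pos (sub_pos.2 (ha hi hj hij)) (sub_pos.2 (huv i hi j hj hij))
  · refine mul_pos_of_neg_of_neg (sub_neg.2 (ha hj hi hji)) (sub_neg.2 ?_)
    linarith [huv j hj i hi hji]

theorem sum_mul_mul_sum_lt_of_strictAntiOn (hs : s.Nontrivial) (ha : StrictAntiOn a s)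
    (huv : ∀ i ∈ s, ∀ j ∈ s, i < j → u i * v j < v i * u j) :
    (∑ i ∈ s, a i * u i) * ∑ i ∈ s, v i < (∑ i ∈ s, a i * v i) * ∑ i ∈ s, u i := by
  have hnonneg : ∀ i ∈ s, ∀ j ∈ s, 0 ≤ (a i - a j) * (v i * u j - u i * v j) := by
    intro i hi j hj
    rcases eq_or_ne i j with rfl | hij
    · simp
    · exact (mul_sub_mul_sub_pos_of_strictAntiOn ha huv hi hj hij).le
  obtain ⟨i, hi, j, hj, hij⟩ := hs
  have hpos : 0 < ∑ i ∈ s, ∑ j ∈ s, (a i - a j) * (v i * u j - u i * v j) :=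
    sum_pos' (fun i hi => sum_nonneg (hnonneg i hi))
      ⟨i, hi, sum_pos' (hnonneg i hi) ⟨j, hj, mul_sub_mul_sub_pos_of_strictAntiOn ha huv hi hj hij⟩⟩
  rw [sum_sum_mul_sub_mul_sub_eq] at hpos
  linarith

end WeightedChebyshev

theorem rpow_neg_mul_rpow_neg_lt {x y α β : ℝ} (hx : 0 < x) (hxy : x < y) (hαβ : α < β) :
    x ^ (-α) * y ^ (-β) < x ^ (-β) * y ^ (-α) := by
  have hy : 0 < y := hx.trans hxy
  have hsplit : ∀ z : ℝ, 0 < z → z ^ (-β) = z ^ (-α) * z ^ (α - β) := fun z hz => by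
    rw [← Real.rpow_add hz]; ring_nf
  have hratio : y ^ (α - β) < x ^ (α - β) := Real.rpow_lt_rpow_of_neg hx hxy (by linarith)
  rw [hsplit x hx, hsplit y hy]
  have hxy_pos : 0 < x ^ (-α) * y ^ (-α) := by positivity
  nlinarith

theorem expected_replication_strict_anti_in_alpha_general (n p : ℕ) (hp : 2 ≤ p) (hn : 3 ≤ n)
    (α β : ℝ) (hαβ : α < β) :
    (p : ℝ) - ((p : ℝ) / ∑ d' ∈ Finset.Icc 1 (n - 1), (d' : ℝ) ^ (-β)) *
        ∑ d ∈ Finset.Icc 1 (n - 1), (((p : ℝ) - 1) / (p : ℝ)) ^ d * (d : ℝ) ^ (-β) <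
      (p : ℝ) - ((p : ℝ) / ∑ d' ∈ Finset.Icc 1 (n - 1), (d' : ℝ) ^ (-α)) *
          ∑ d ∈ Finset.Icc 1 (n - 1), (((p : ℝ) - 1) / (p : ℝ)) ^ d * (d : ℝ) ^ (-α) := by
  have hp0 : (0 : ℝ) < p := by positivity
  have hp1 : (1 : ℝ) < p := by exact_mod_cast hp
  have hmem : ∀ d ∈ Icc 1 (n - 1), (0 : ℝ) < d := fun d hd => by
    exact_mod_cast (mem_Icc.1 hd).1
  have hone : 1 ∈ Icc 1 (n - 1) := mem_Icc.2 ⟨le_rfl, by omega⟩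
  have hsum_pos : ∀ γ : ℝ, 0 < ∑ d ∈ Icc 1 (n - 1), (d : ℝ) ^ (-γ) := fun γ =>
    sum_pos (fun d hd => Real.rpow_pos_of_pos (hmem d hd) _) ⟨1, hone⟩
  have hc : StrictAntiOn (fun d : ℕ => (((p : ℝ) - 1) / p) ^ d) (Icc 1 (n - 1)) :=
    (pow_right_strictAnti₀ (by bound) ((div_lt_one hp0).2 (by linarith))).strictAntiOn _
  have hchebyshev := sum_mul_mul_sum_lt_of_strictAntiOn
    ⟨1, hone, 2, mem_Icc.2 ⟨by norm_num, by omega⟩, by norm_num⟩ hc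
    (fun i hi j _ hij => rpow_neg_mul_rpow_neg_lt (hmem i hi) (by exact_mod_cast hij) hαβ)
  rw [sub_lt_sub_iff_left, div_mul_eq_mul_div, div_mul_eq_mul_div,
    div_lt_div_iff₀ (hsum_pos α) (hsum_pos β), mul_assoc, mul_assoc]
  exact mul_lt_mul_of_pos_left hchebyshev hp0

/-- For fixed `p ≥ 2` and `n ≥ 3`, the expected replication factor
`R(α) = p - (p / h_n(α)) Σ_{d=1}^{n-1} ((p-1)/p)^d d^(-α)` is strictly decreasing
in `α > 0`. -/
theorem expected_replication_strict_anti_in_alpha (n p : ℕ) (hp : 2 ≤ p) (hn : 3 ≤ n)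
    (α β : ℝ) (hα : 0 < α) (hαβ : α < β) :
    (p : ℝ) - ((p : ℝ) / ∑ d' ∈ Finset.Icc 1 (n - 1), (d' : ℝ) ^ (-β)) *
        ∑ d ∈ Finset.Icc 1 (n - 1), (((p : ℝ) - 1) / (p : ℝ)) ^ d * (d : ℝ) ^ (-β) <
      (p : ℝ) - ((p : ℝ) / ∑ d' ∈ Finset.Icc 1 (n - 1), (d' : ℝ) ^ (-α)) *
          ∑ d ∈ Finset.Icc 1 (n - 1), (((p : ℝ) - 1) / (p : ℝ)) ^ d * (d : ℝ) ^ (-α) :=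
  expected_replication_strict_anti_in_alpha_general n p hp hn α β hαβ
end
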